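/- Let G be a finite p-group and d ≥ 0 such that G^(d) γ_{2^d+1}(G) / γ_{2^d+1}(G) can be generated by two elements. Then G^(d+1) γ_{2^{d+1}+1}(G) / γ_{2^{d+1}+1}(G) is cyclic. -/

import Mathlib

/-!
Write `γ k` for Mathlib's `(⊤ : Subgroup G).lowerCentralSeries k`, which is the `(k + 1)`-st term
of the lower central series in the usual numbering, and put `n = 2 ^ d`. By the three subgroups
lemma `⁅γ i, γ j⁆ ≤ γ (i + j + 1)`, hence `G^(d) ≤ γ (n - 1)`. If the images of `a, b ∈ G^(d)`
generate `G^(d) γ n / γ n`, then `G^(d) ≤ ⟨a, b, γ n⟩`. Modulo `γ (2 n)` the subgroup `γ n`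
commutes with `γ (n - 1) ∋ a, b`, and `⁅a, b⁆ ∈ γ (2 n - 1)` is central; so modulo `⟨⁅a, b⁆⟩`
all generators commute, and `G^(d + 1) = ⁅G^(d), G^(d)⁆` maps into the cyclic group `⟨⁅a, b⁆⟩`.
-/

open scoped commutatorElement

namespace Subgroup

variable {G : Type*} [Group G]

theorem normal_of_le_center {H : Subgroup G} (hH : H ≤ center G) : H.Normal :=
  ⟨fun h hh k => by rwa [mem_center_iff.mp (hH hh) k, mul_inv_cancel_right]⟩

theorem commutator_commutator_le_of_rotate {H₁ H₂ H₃ N : Subgroup G} [N.Normal]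
    (h1 : ⁅⁅H₂, H₃⁆, H₁⁆ ≤ N) (h2 : ⁅⁅H₃, H₁⁆, H₂⁆ ≤ N) : ⁅⁅H₁, H₂⁆, H₃⁆ ≤ N := by
  simp only [← QuotientGroup.ker_mk' N, ← map_eq_bot_iff, map_commutator] at h1 h2 ⊢
  exact commutator_commutator_eq_bot_of_rotate h1 h2

theorem commutator_closure_closure_le {S T : Set G} {N : Subgroup G} [N.Normal]
    (h : ∀ x ∈ S, ∀ y ∈ T, ⁅x, y⁆ ∈ N) : ⁅closure S, closure T⁆ ≤ N := by
  rw [← QuotientGroup.ker_mk' N, ← map_eq_bot_iff, map_commutator, MonoidHom.map_closure,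
    MonoidHom.map_closure, commutator_eq_bot_iff_le_centralizer, centralizer_closure, closure_le]
  rintro _ ⟨x, hx, rfl⟩
  rw [SetLike.mem_coe, mem_centralizer_iff]
  rintro _ ⟨y, hy, rfl⟩
  refine (commutatorElement_eq_one_iff_mul_comm.mp ?_).symm
  rw [← map_commutatorElement, QuotientGroup.mk'_apply, QuotientGroup.eq_one_iff]
  exact h x hx y hy

theorem le_closure_union_of_map_mk'_eq_closure_image {H N : Subgroup G} [N.Normal] {S : Set G}
    (h : H.map (QuotientGroup.mk' N) = closure (QuotientGroup.mk' N '' S)) :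
    H ≤ closure (S ∪ N) := by
  have := le_comap_map (QuotientGroup.mk' N) H
  rwa [h, ← MonoidHom.map_closure, comap_map_eq, QuotientGroup.ker_mk', ← closure_eq N,
    ← closure_union] at this

theorem commutator_closure_pair_union_le {A Z N : Subgroup G} [N.Normal] {a b : G}
    (ha : a ∈ A) (hb : b ∈ A) (hZA : Z ≤ A) (hAZ : ⁅A, Z⁆ ≤ N) (hab : ⁅a, b⁆ ∈ N) :
    ⁅closure ({a, b} ∪ Z), closure ({a, b} ∪ Z)⁆ ≤ N := by
  have hAS : {a, b} ∪ (Z : Set G) ⊆ A := Set.union_subset (Set.pair_subset ha hb) hZA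
  have hba : ⁅b, a⁆ ∈ N := commutatorElement_inv a b ▸ inv_mem hab
  refine commutator_closure_closure_le fun x hx y hy => ?_
  rcases hy with hy | hy
  · rcases hx with hx | hx
    · rcases hx with rfl | rfl <;> rcases hy with rfl | rfl <;>
        simp only [commutatorElement_self, one_mem, hab, hba]
    · rw [← commutatorElement_inv]
      exact inv_mem (hAZ (commutator_mem_commutator (hAS (Or.inl hy)) hx))
  · exact hAZ (commutator_mem_commutator (hAS hx) hy)

theorem commutator_lowerCentralSeries_le (i j : ℕ) :
    ⁅(⊤ : Subgroup G).lowerCentralSeries i, (⊤ : Subgroup G).lowerCentralSeries j⁆ ≤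
      (⊤ : Subgroup G).lowerCentralSeries (i + j + 1) := by
  induction j generalizing i with
  | zero => rfl
  | succ j ih =>
    rw [lowerCentralSeries_succ, commutator_comm]
    refine commutator_commutator_le_of_rotate ?_ ?_
    · rw [commutator_comm ⊤, ← lowerCentralSeries_succ]
      exact (ih (i + 1)).trans (lowerCentralSeries_antitone ⊤ (by omega))
    · exact commutator_mono (ih i) le_rfl

theorem derivedSeries_le_lowerCentralSeries (d : ℕ) :
    derivedSeries G d ≤ (⊤ : Subgroup G).lowerCentralSeries (2 ^ d - 1) := by
  induction d with
  | zero => exact le_top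
  | succ d ih =>
    refine (commutator_mono ih ih).trans
      ((commutator_lowerCentralSeries_le _ _).trans (lowerCentralSeries_antitone ⊤ ?_))
    have := Nat.one_le_two_pow (n := d)
    rw [pow_succ]
    omega

theorem mk'_mem_center_of_mem_lowerCentralSeries {k m : ℕ} (hm : m ≤ k + 1) {g : G}
    (hg : g ∈ (⊤ : Subgroup G).lowerCentralSeries k) :
    QuotientGroup.mk' ((⊤ : Subgroup G).lowerCentralSeries m) g ∈ center _ := by
  refine mem_center_iff.mpr fun q => ?_
  obtain ⟨h, rfl⟩ := QuotientGroup.mk'_surjective _ q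
  refine (commutatorElement_eq_one_iff_mul_comm.mp ?_).symm
  rw [← map_commutatorElement, QuotientGroup.mk'_apply, QuotientGroup.eq_one_iff]
  exact lowerCentralSeries_antitone ⊤ hm (commutator_mem_commutator hg (mem_top h))

end Subgroup

open Subgroup

theorem cyclic_image_of_two_generated_image_general
    {G : Type*} [Group G]
    (d : ℕ)
    (h2gen : ∃ x y : G ⧸ (⊤ : Subgroup G).lowerCentralSeries (2 ^ d),
      Subgroup.closure {x, y} =
        Subgroup.map (QuotientGroup.mk' ((⊤ : Subgroup G).lowerCentralSeries (2 ^ d)))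
          (derivedSeries G d)) :
    IsCyclic
      (Subgroup.map (QuotientGroup.mk' ((⊤ : Subgroup G).lowerCentralSeries (2 ^ (d + 1))))
        (derivedSeries G (d + 1))) := by
  obtain ⟨x, y, hxy⟩ := h2gen
  obtain ⟨a, ha, rfl⟩ : x ∈ (derivedSeries G d).map (QuotientGroup.mk' _) :=
    hxy ▸ subset_closure (by simp)
  obtain ⟨b, hb, rfl⟩ : y ∈ (derivedSeries G d).map (QuotientGroup.mk' _) :=
    hxy ▸ subset_closure (by simp)
  have hD : derivedSeries G d ≤ closure ({a, b} ∪ (⊤ : Subgroup G).lowerCentralSeries (2 ^ d)) :=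
    le_closure_union_of_map_mk'_eq_closure_image (by rw [Set.image_pair, hxy])
  have hn := Nat.one_le_two_pow (n := d)
  have h2n : 2 ^ (d + 1) = 2 * 2 ^ d := pow_succ' 2 d
  set π := QuotientGroup.mk' ((⊤ : Subgroup G).lowerCentralSeries (2 ^ (d + 1)))
  have hA := derivedSeries_le_lowerCentralSeries (G := G) d
  have hcentral : π ⁅a, b⁆ ∈ center _ := mk'_mem_center_of_mem_lowerCentralSeries (by omega)
    (commutator_lowerCentralSeries_le _ _ (commutator_mem_commutator (hA ha) (hA hb)))
  have : (zpowers (π ⁅a, b⁆)).Normal := normal_of_le_center (zpowers_le.mpr hcentral)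
  have hAZ : ⁅(⊤ : Subgroup G).lowerCentralSeries (2 ^ d - 1),
      (⊤ : Subgroup G).lowerCentralSeries (2 ^ d)⁆ ≤ π.ker := by
    rw [QuotientGroup.ker_mk']
    exact (commutator_lowerCentralSeries_le _ _).trans
      (Subgroup.lowerCentralSeries_antitone ⊤ (by omega))
  refine isCyclic_of_le (H' := zpowers (π ⁅a, b⁆)) (map_le_iff_le_comap.mpr ?_)
  exact (commutator_mono hD hD).trans (commutator_closure_pair_union_le (hA ha) (hA hb)
    (Subgroup.lowerCentralSeries_antitone ⊤ (Nat.sub_le _ _))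
    (hAZ.trans (MonoidHom.ker_le_comap _ _)) (mem_zpowers _))

theorem cyclic_image_of_two_generated_image
    {p : ℕ} [Fact p.Prime] {G : Type*} [Group G] [Finite G]
    (hG : IsPGroup p G) (d : ℕ)
    (h2gen : ∃ x y : G ⧸ (⊤ : Subgroup G).lowerCentralSeries (2 ^ d),
      Subgroup.closure {x, y} =
        Subgroup.map (QuotientGroup.mk' ((⊤ : Subgroup G).lowerCentralSeries (2 ^ d)))
          (derivedSeries G d)) :
    IsCyclic
      (Subgroup.map (QuotientGroup.mk' ((⊤ : Subgroup G).lowerCentralSeries (2 ^ (d + 1))))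
        (derivedSeries G (d + 1))) :=
  cyclic_image_of_two_generated_image_general d h2gen
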